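/- In the Gaussian sequence model with block structure, assume that for every j, p_j − s_j > 1, s_j > 1, and the betamin condition β*_{min,j} ≥ √(2 ln(p_j − s_j)/n) + √(2 ln(s_j)/n) holds for every sufficiently large n. Define the oracle thresholds τ*_j = β*_{min,j}/2 + ln(p_j/s_j − 1)/(n β*_{min,j}). Then the thresholds τ*_j satisfy Assumption A4 (√n τ*_j ≥ √(2 ln(p_j − s_j)) eventually) and Assumption A5 (√n(β*_{min,j} − τ*_j) ≥ √(2 ln s_j) eventually), and the block threshold selector Ŝ^b using thresholds τ*_j satisfies, for every sufficiently large n: P(Ŝ^b ≠ S) ≤ 2 Σ_{j=1}^b e^{−[ (n/8)(β*_{min,j})² − ln max{p_j − s_j, s_j} ]}. (Theorem 3.4, second part: oracle thresholds and oracle convergence rate.) -/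

import Mathlib

/-!
A coordinate is misclassified only if an inactive one exceeds `τ*_j` in absolute value or an
active one does not. Comparing the Gaussian densities on a half-line gives the tail bound
`P(X ≥ μ + u) ≤ e^{-nu²/2} / 2`, so by a union bound the error probability is at most
`∑_j ((p_j - s_j) e^{-nτ*_j²/2} + s_j e^{-n(β_j - τ*_j)²/2})` with `β_j = β*_{min,j}`.
Writing `L = ln (p_j - s_j) - ln s_j`, we have `τ*_j = β_j/2 + L/(nβ_j)`, hence
`nτ*_j²/2 = nβ_j²/8 + L/2 + L²/(2nβ_j²)`, and the same with `-L` for `β_j - τ*_j`; so each of the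
two terms is at most `e^{-nβ_j²/8 + (ln (p_j - s_j) + ln s_j)/2} ≤ e^{-(nβ_j²/8 - ln max)}`.
Assumptions A4 and A5 reduce to `(x - U)² ≥ V²` for `x = √n β_j ≥ U + V`,
`U = √(2 ln (p_j - s_j))`, `V = √(2 ln s_j)`.
-/

open MeasureTheory ProbabilityTheory Filter Finset
open scoped NNReal

/-- Number of truly inactive coordinates in block `j` (that is, `p_j − s_j`). -/
noncomputable def inactJ {P b : ℕ} (blk : Fin P → Fin b) (βs : Fin P → ℝ) (j : Fin b) : ℕ :=
  (Finset.univ.filter (fun i => blk i = j ∧ βs i = 0)).card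

/-- Number of truly active coordinates in block `j` (that is, `s_j`). -/
noncomputable def actJ {P b : ℕ} (blk : Fin P → Fin b) (βs : Fin P → ℝ) (j : Fin b) : ℕ :=
  (Finset.univ.filter (fun i => blk i = j ∧ βs i ≠ 0)).card

/-- Number of coordinates in block `j` (that is, `p_j`). -/
noncomputable def blkCard {P b : ℕ} (blk : Fin P → Fin b) (j : Fin b) : ℕ :=
  (Finset.univ.filter (fun i => blk i = j)).card

/-- The oracle threshold `τ*_j = β*_{min,j}/2 + ln(p_j/s_j − 1)/(n β*_{min,j})`. -/
noncomputable def tauStar {b : ℕ} (p : ℕ → ℕ) (blk : (n : ℕ) → Fin (p n) → Fin b)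
    (βs : (n : ℕ) → Fin (p n) → ℝ) (βmin : ℕ → Fin b → ℝ) (n : ℕ) (j : Fin b) : ℝ :=
  βmin n j / 2 +
    Real.log ((blkCard (blk n) j : ℝ) / (actJ (blk n) (βs n) j : ℝ) - 1) /
      (n * βmin n j)

open Real

namespace ProbabilityTheory

variable {μ t : ℝ} {v : ℝ≥0}

lemma gaussianReal_Iic_eq_Ici :
    gaussianReal μ v (Set.Iic t) = gaussianReal μ v (Set.Ici (2 * μ - t)) := by
  have hreflect : (gaussianReal μ v).map (2 * μ - ·) = gaussianReal μ v := by
    rw [gaussianReal_map_const_sub]; ring_nf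
  conv_lhs => rw [← hreflect]
  rw [Measure.map_apply (by fun_prop) measurableSet_Iic]
  congr 1
  ext x
  simp only [Set.mem_preimage, Set.mem_Iic, Set.mem_Ici]
  constructor <;> intro h <;> linarith

lemma gaussianReal_Ici_self (hv : v ≠ 0) : gaussianReal μ v (Set.Ici μ) = 1 / 2 := by
  have hcompl := measure_add_measure_compl (μ := gaussianReal μ v) (measurableSet_Ici (a := μ))
  rw [Set.compl_Ici, measure_univ,
    measure_congr (Iio_ae_eq_Iic' ((gaussianReal_absolutelyContinuous μ hv) volume_singleton)),
    gaussianReal_Iic_eq_Ici, show 2 * μ - μ = μ by ring, ← two_mul] at hcompl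
  rw [ENNReal.eq_div_iff two_ne_zero ENNReal.ofNat_ne_top, hcompl]

/-- The factor `1 / 2`, absent from the Chernoff bound, is what yields the constant `2` in the final
bound. -/
lemma gaussianReal_Ici_le (hv : v ≠ 0) (h : μ ≤ t) :
    gaussianReal μ v (Set.Ici t) ≤ ENNReal.ofReal (exp (-(t - μ) ^ 2 / (2 * v)) / 2) := by
  set C := exp (-(t - μ) ^ 2 / (2 * v))
  have hpdf : ∀ x ∈ Set.Ici t, gaussianPDF μ v x ≤ ENNReal.ofReal C * gaussianPDF t v x := by
    intro x hx
    rw [gaussianPDF, gaussianPDF, ← ENNReal.ofReal_mul (by positivity)]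
    refine ENNReal.ofReal_le_ofReal ?_
    rw [gaussianPDFReal, gaussianPDFReal, mul_left_comm]
    refine mul_le_mul_of_nonneg_left ?_ (by positivity)
    rw [← exp_add, exp_le_exp, ← add_div, div_le_div_iff_of_pos_right (by positivity)]
    nlinarith [mul_nonneg (sub_nonneg.2 (Set.mem_Ici.1 hx)) (sub_nonneg.2 h)]
  calc gaussianReal μ v (Set.Ici t) = ∫⁻ x in Set.Ici t, gaussianPDF μ v x :=
        gaussianReal_apply _ hv _
    _ ≤ ∫⁻ x in Set.Ici t, ENNReal.ofReal C * gaussianPDF t v x :=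
        setLIntegral_mono ((measurable_gaussianPDF t v).const_mul _) hpdf
    _ = ENNReal.ofReal C * gaussianReal t v (Set.Ici t) := by
        rw [lintegral_const_mul _ (measurable_gaussianPDF t v), gaussianReal_apply _ hv]
    _ = ENNReal.ofReal (C / 2) := by
        rw [gaussianReal_Ici_self hv, ENNReal.ofReal_div_of_pos two_pos, ENNReal.ofReal_ofNat,
          mul_one_div]

lemma gaussianReal_Iic_le (hv : v ≠ 0) (h : t ≤ μ) :
    gaussianReal μ v (Set.Iic t) ≤ ENNReal.ofReal (exp (-(μ - t) ^ 2 / (2 * v)) / 2) := by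
  rw [gaussianReal_Iic_eq_Ici]
  convert gaussianReal_Ici_le hv (t := 2 * μ - t) (by linarith) using 5
  ring

lemma gaussianReal_zero_lt_abs_le (hv : v ≠ 0) {τ : ℝ} (hτ : 0 ≤ τ) :
    gaussianReal 0 v {x | τ < |x|} ≤ ENNReal.ofReal (exp (-τ ^ 2 / (2 * v))) := by
  have hsub : {x : ℝ | τ < |x|} ⊆ Set.Ici τ ∪ Set.Iic (-τ) := by
    intro x hx
    rcases le_total 0 x with h0 | h0
    · exact Or.inl (Set.mem_Ici.2 (by rw [Set.mem_ofPred_eq, abs_of_nonneg h0] at hx; linarith))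
    · exact Or.inr (Set.mem_Iic.2 (by rw [Set.mem_ofPred_eq, abs_of_nonpos h0] at hx; linarith))
  calc gaussianReal 0 v {x | τ < |x|}
      ≤ gaussianReal 0 v (Set.Ici τ) + gaussianReal 0 v (Set.Iic (-τ)) :=
        (measure_mono hsub).trans (measure_union_le _ _)
    _ ≤ ENNReal.ofReal (exp (-(τ - 0) ^ 2 / (2 * v)) / 2) +
          ENNReal.ofReal (exp (-(0 - -τ) ^ 2 / (2 * v)) / 2) :=
        add_le_add (gaussianReal_Ici_le hv hτ) (gaussianReal_Iic_le hv (by linarith))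
    _ = ENNReal.ofReal (exp (-τ ^ 2 / (2 * v))) := by
        rw [← ENNReal.ofReal_add (by positivity) (by positivity)]
        ring_nf

lemma gaussianReal_abs_le_le (hv : v ≠ 0) {τ : ℝ} (hτ : τ ≤ |μ|) :
    gaussianReal μ v {x | |x| ≤ τ} ≤ ENNReal.ofReal (exp (-(|μ| - τ) ^ 2 / (2 * v)) / 2) := by
  rcases le_total 0 μ with h0 | h0
  · rw [abs_of_nonneg h0] at hτ ⊢
    exact (measure_mono fun x hx => (le_abs_self x).trans hx).trans (gaussianReal_Iic_le hv hτ)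
  · rw [abs_of_nonpos h0] at hτ ⊢
    have hsub : {x : ℝ | |x| ≤ τ} ⊆ Set.Ici (-τ) := fun x (hx : |x| ≤ τ) => by
      simp only [Set.mem_Ici]; linarith [neg_abs_le x]
    refine (measure_mono hsub).trans ((gaussianReal_Ici_le hv (by linarith)).trans_eq ?_)
    ring_nf

lemma gaussianReal_selection_error_le (hv : v ≠ 0) {β τ : ℝ} (hτ : 0 ≤ τ) (hτβ : τ ≤ β)
    (hβ : μ ≠ 0 → β ≤ |μ|) :
    gaussianReal μ v {x | ¬(τ < |x| ↔ μ ≠ 0)} ≤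
      ENNReal.ofReal (if μ = 0 then exp (-τ ^ 2 / (2 * v)) else exp (-(β - τ) ^ 2 / (2 * v))) := by
  by_cases hμ : μ = 0
  · subst hμ
    simpa using gaussianReal_zero_lt_abs_le hv hτ
  · have hβμ := hβ hμ
    simp only [hμ, ne_eq, not_false_eq_true, iff_true, not_lt, if_false]
    refine (gaussianReal_abs_le_le hv (hτβ.trans hβμ)).trans (ENNReal.ofReal_le_ofReal ?_)
    calc exp (-(|μ| - τ) ^ 2 / (2 * v)) / 2 ≤ exp (-(|μ| - τ) ^ 2 / (2 * v)) :=
          half_le_self (exp_pos _).le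
      _ ≤ exp (-(β - τ) ^ 2 / (2 * v)) := by gcongr

end ProbabilityTheory

noncomputable def oracleThreshold (n β a c : ℝ) : ℝ := β / 2 + (a - c) / (n * β)

lemma sub_oracleThreshold (n β a c : ℝ) :
    β - oracleThreshold n β a c = oracleThreshold n β c a := by
  unfold oracleThreshold; ring

lemma pos_of_sqrt_add_sqrt_le {n β a c : ℝ} (hn : 0 < n) (ha : 0 < a)
    (hβ : √(2 * a / n) + √(2 * c / n) ≤ β) : 0 < β :=
  (add_pos_of_pos_of_nonneg (sqrt_pos.2 (by positivity)) (sqrt_nonneg _)).trans_le hβ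

/-- Assumption A4 for `τ*_j = oracleThreshold n β (ln (p_j - s_j)) (ln s_j)`; by
`sub_oracleThreshold`, swapping `a` and `c` gives A5. -/
lemma sqrt_two_mul_le_sqrt_mul_oracleThreshold {n β a c : ℝ} (hn : 0 < n) (ha : 0 < a)
    (hc : 0 ≤ c) (hβ : √(2 * a / n) + √(2 * c / n) ≤ β) :
    √(2 * a) ≤ √n * oracleThreshold n β a c := by
  have hβ0 := pos_of_sqrt_add_sqrt_le hn ha hβ
  have hsn : 0 < √n := sqrt_pos.2 hn
  have hx : √(2 * a) + √(2 * c) ≤ √n * β := by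
    rwa [sqrt_div (by positivity), sqrt_div (by positivity), ← add_div, div_le_iff₀ hsn,
      mul_comm β] at hβ
  have hτ : √n * oracleThreshold n β a c =
      ((√n * β) ^ 2 + √(2 * a) ^ 2 - √(2 * c) ^ 2) / (2 * (√n * β)) := by
    rw [oracleThreshold, sq_sqrt (by positivity : 0 ≤ 2 * a), sq_sqrt (by positivity : 0 ≤ 2 * c),
      mul_pow, sq_sqrt hn.le]
    field_simp
    rw [sq_sqrt hn.le]
    ring
  rw [hτ, le_div_iff₀ (by positivity)]
  nlinarith [sqrt_nonneg (2 * c), sqrt_nonneg (2 * a)]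

lemma oracleThreshold_nonneg {n β a c : ℝ} (hn : 0 < n) (ha : 0 < a) (hc : 0 ≤ c)
    (hβ : √(2 * a / n) + √(2 * c / n) ≤ β) : 0 ≤ oracleThreshold n β a c :=
  (mul_nonneg_iff_of_pos_left (sqrt_pos.2 hn)).1
    ((sqrt_nonneg _).trans (sqrt_two_mul_le_sqrt_mul_oracleThreshold hn ha hc hβ))

lemma oracleThreshold_le {n β a c : ℝ} (hn : 0 < n) (ha : 0 ≤ a) (hc : 0 < c)
    (hβ : √(2 * a / n) + √(2 * c / n) ≤ β) : oracleThreshold n β a c ≤ β := by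
  rw [← sub_nonneg, sub_oracleThreshold]
  exact oracleThreshold_nonneg hn hc ha (by rwa [add_comm])

lemma mul_exp_neg_oracleThreshold_le {n β m m' : ℝ} (hn : 0 < n) (hβ : 0 < β) (hm : 0 < m)
    (hm' : 0 < m') :
    m * exp (-(n * oracleThreshold n β (log m) (log m') ^ 2 / 2)) ≤
      exp (-(n / 8 * β ^ 2 - log (max m m'))) := by
  set L := log m - log m'
  have hsq : n * oracleThreshold n β (log m) (log m') ^ 2 / 2 =
      n * β ^ 2 / 8 + L / 2 + L ^ 2 / (2 * n * β ^ 2) := by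
    rw [oracleThreshold]; field_simp; ring
  have hlog : (log m + log m') / 2 ≤ log (max m m') := by
    linarith [log_le_log hm (le_max_left m m'), log_le_log hm' (le_max_right m m')]
  calc m * exp (-(n * oracleThreshold n β (log m) (log m') ^ 2 / 2))
      = exp (log m - (n * β ^ 2 / 8 + L / 2 + L ^ 2 / (2 * n * β ^ 2))) := by
        rw [exp_sub, exp_log hm, hsq, exp_neg, div_eq_mul_inv m]
    _ ≤ exp (-(n / 8 * β ^ 2 - log (max m m'))) := by
        gcongr
        have : 0 ≤ L ^ 2 / (2 * n * β ^ 2) := by positivity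
        linarith

lemma card_inactJ_add_actJ {P b : ℕ} (blk : Fin P → Fin b) (βs : Fin P → ℝ) (j : Fin b) :
    inactJ blk βs j + actJ blk βs j = blkCard blk j := by
  unfold blkCard inactJ actJ
  rw [← Finset.filter_filter, ← Finset.filter_filter]
  exact Finset.card_filter_add_card_filter_not _

lemma tauStar_eq_oracleThreshold {b : ℕ} (p : ℕ → ℕ) (blk : (n : ℕ) → Fin (p n) → Fin b)
    (βs : (n : ℕ) → Fin (p n) → ℝ) (βmin : ℕ → Fin b → ℝ) (n : ℕ) (j : Fin b)
    (hinact : 0 < inactJ (blk n) (βs n) j) (hact : 0 < actJ (blk n) (βs n) j) :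
    tauStar p blk βs βmin n j = oracleThreshold n (βmin n j)
      (log (inactJ (blk n) (βs n) j)) (log (actJ (blk n) (βs n) j)) := by
  have hact' : (0 : ℝ) < actJ (blk n) (βs n) j := by exact_mod_cast hact
  rw [tauStar, oracleThreshold, ← card_inactJ_add_actJ, Nat.cast_add, add_div,
    div_self hact'.ne', add_sub_cancel_right, log_div (by positivity) hact'.ne']

lemma sum_ite_eq_sum_inactJ_actJ {P b : ℕ} (blk : Fin P → Fin b) (βs : Fin P → ℝ)
    (f g : Fin b → ℝ) :
    ∑ i, (if βs i = 0 then f (blk i) else g (blk i)) =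
      ∑ j, (inactJ blk βs j * f j + actJ blk βs j * g j) := by
  rw [← Finset.sum_fiberwise Finset.univ blk]
  refine Finset.sum_congr rfl fun j _ => ?_
  rw [Finset.sum_congr rfl fun i hi => by rw [(Finset.mem_filter.1 hi).2],
    Finset.sum_ite, Finset.sum_const, Finset.sum_const, Finset.filter_filter,
    Finset.filter_filter, nsmul_eq_mul, nsmul_eq_mul]
  rfl

theorem measure_blockSelection_error_le {P b : ℕ} {Ω : Type*} [MeasurableSpace Ω]
    (Pr : Measure Ω) (blk : Fin P → Fin b) (βs : Fin P → ℝ) (βt : Fin P → Ω → ℝ)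
    (hmeas : ∀ i, Measurable (βt i)) {v : ℝ≥0} (hv : v ≠ 0)
    (hlaw : ∀ i, Pr.map (βt i) = gaussianReal (βs i) v) (β τ : Fin b → ℝ)
    (hτ : ∀ j, 0 ≤ τ j) (hτβ : ∀ j, τ j ≤ β j) (hβ : ∀ i, βs i ≠ 0 → β (blk i) ≤ |βs i|) :
    Pr {ω | ¬ ∀ i, (τ (blk i) < |βt i ω| ↔ βs i ≠ 0)} ≤
      ENNReal.ofReal (∑ j, (inactJ blk βs j * exp (-τ j ^ 2 / (2 * v)) +
        actJ blk βs j * exp (-(β j - τ j) ^ 2 / (2 * v)))) := by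
  rw [← sum_ite_eq_sum_inactJ_actJ,
    ENNReal.ofReal_sum_of_nonneg fun i _ => by split_ifs <;> positivity]
  have hmeasSet : ∀ i, MeasurableSet {x : ℝ | ¬(τ (blk i) < |x| ↔ βs i ≠ 0)} := fun i =>
    ((measurableSet_lt measurable_const measurable_abs).iff (.const _)).compl
  calc Pr {ω | ¬ ∀ i, (τ (blk i) < |βt i ω| ↔ βs i ≠ 0)}
      = Pr (⋃ i, βt i ⁻¹' {x | ¬(τ (blk i) < |x| ↔ βs i ≠ 0)}) := by
        congr 1
        ext ω
        simp only [Set.mem_ofPred_eq, Set.mem_iUnion, Set.mem_preimage, not_forall]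
    _ ≤ ∑ i, Pr (βt i ⁻¹' {x | ¬(τ (blk i) < |x| ↔ βs i ≠ 0)}) := measure_iUnion_fintype_le _ _
    _ ≤ _ := by
        gcongr with i
        rw [← Measure.map_apply (hmeas i) (hmeasSet i), hlaw i]
        exact gaussianReal_selection_error_le hv (hτ _) (hτβ _) (hβ i)

theorem toReal_measure_oracleSelection_error_le {P b : ℕ} {Ω : Type*} [MeasurableSpace Ω]
    (Pr : Measure Ω) (blk : Fin P → Fin b) (βs : Fin P → ℝ) (βt : Fin P → Ω → ℝ)
    (hmeas : ∀ i, Measurable (βt i)) {n : ℕ} (hn : 0 < n)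
    (hlaw : ∀ i, Pr.map (βt i) = gaussianReal (βs i) (n : ℝ≥0)⁻¹) (β : Fin b → ℝ)
    (hβ : ∀ i, βs i ≠ 0 → β (blk i) ≤ |βs i|)
    (hcard : ∀ j, 1 < inactJ blk βs j ∧ 1 < actJ blk βs j)
    (hbetamin : ∀ j, √(2 * log (inactJ blk βs j) / n) + √(2 * log (actJ blk βs j) / n) ≤ β j) :
    (Pr {ω | ¬ ∀ i, (oracleThreshold n (β (blk i)) (log (inactJ blk βs (blk i)))
        (log (actJ blk βs (blk i))) < |βt i ω| ↔ βs i ≠ 0)}).toReal ≤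
      2 * ∑ j, exp (-((n / 8) * β j ^ 2 - log (max (inactJ blk βs j) (actJ blk βs j)))) := by
  have hn' : (0 : ℝ) < n := by exact_mod_cast hn
  have hm : ∀ j, (1 : ℝ) < inactJ blk βs j := fun j => by exact_mod_cast (hcard j).1
  have hm' : ∀ j, (1 : ℝ) < actJ blk βs j := fun j => by exact_mod_cast (hcard j).2
  have hvar : ∀ x : ℝ, -x ^ 2 / (2 * (((n : ℝ≥0)⁻¹ : ℝ≥0) : ℝ)) = -(n * x ^ 2 / 2) := by
    intro x; push_cast; field_simp
  refine ENNReal.toReal_le_of_le_ofReal (by positivity) <|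
    (measure_blockSelection_error_le Pr blk βs βt hmeas (inv_ne_zero (by exact_mod_cast hn.ne'))
      hlaw β _
      (fun j => oracleThreshold_nonneg hn' (log_pos (hm j)) (log_pos (hm' j)).le (hbetamin j))
      (fun j => oracleThreshold_le hn' (log_pos (hm j)).le (log_pos (hm' j)) (hbetamin j))
      hβ).trans (ENNReal.ofReal_le_ofReal ?_)
  rw [mul_sum]
  refine sum_le_sum fun j _ => ?_
  have hβ0 := pos_of_sqrt_add_sqrt_le hn' (log_pos (hm j)) (hbetamin j)
  rw [hvar, hvar, sub_oracleThreshold, two_mul]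
  exact add_le_add
    (mul_exp_neg_oracleThreshold_le hn' hβ0 (one_pos.trans (hm j)) (one_pos.trans (hm' j)))
    (max_comm (inactJ blk βs j : ℝ) _ ▸
      mul_exp_neg_oracleThreshold_le hn' hβ0 (one_pos.trans (hm' j)) (one_pos.trans (hm j)))

theorem stmt10_general (b : ℕ) (p : ℕ → ℕ)
    (blk : (n : ℕ) → Fin (p n) → Fin b)
    (βs : (n : ℕ) → Fin (p n) → ℝ)
    (Ω : ℕ → Type) [∀ n, MeasurableSpace (Ω n)]
    (Pr : (n : ℕ) → Measure (Ω n))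
    (βt : (n : ℕ) → Fin (p n) → Ω n → ℝ)
    (hmeas : ∀ n i, Measurable (βt n i))
    (hlaw : ∀ n i, Measure.map (βt n i) (Pr n) =
      gaussianReal (βs n i) ((n : ℝ≥0))⁻¹)
    (βmin : ℕ → Fin b → ℝ)
    (hβmin : ∀ n j, (∀ i : Fin (p n), blk n i = j → βs n i ≠ 0 → βmin n j ≤ |βs n i|) ∧
      ∃ i : Fin (p n), blk n i = j ∧ βs n i ≠ 0 ∧ βmin n j = |βs n i|)
    (hcard : ∀ n j, 1 < inactJ (blk n) (βs n) j ∧ 1 < actJ (blk n) (βs n) j)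
    (hbetamin : ∀ j, ∀ᶠ n : ℕ in atTop,
      Real.sqrt (2 * Real.log (inactJ (blk n) (βs n) j) / n) +
        Real.sqrt (2 * Real.log (actJ (blk n) (βs n) j) / n) ≤ βmin n j) :
    (∀ j, ∀ᶠ n : ℕ in atTop,
      Real.sqrt (2 * Real.log (inactJ (blk n) (βs n) j)) ≤
        Real.sqrt n * tauStar p blk βs βmin n j) ∧
    (∀ j, ∀ᶠ n : ℕ in atTop,
      Real.sqrt (2 * Real.log (actJ (blk n) (βs n) j)) ≤
        Real.sqrt n * (βmin n j - tauStar p blk βs βmin n j)) ∧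
    (∀ᶠ n : ℕ in atTop,
      (Pr n {ω | ¬ ∀ i : Fin (p n),
          (tauStar p blk βs βmin n (blk n i) < |βt n i ω| ↔ βs n i ≠ 0)}).toReal ≤
        2 * ∑ j : Fin b,
          Real.exp (-((n / 8) * βmin n j ^ 2 -
            Real.log (max (inactJ (blk n) (βs n) j) (actJ (blk n) (βs n) j))))) := by
  have hlog : ∀ n j, 0 < log (inactJ (blk n) (βs n) j) ∧ 0 < log (actJ (blk n) (βs n) j) :=
    fun n j => ⟨log_pos (by exact_mod_cast (hcard n j).1),
      log_pos (by exact_mod_cast (hcard n j).2)⟩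
  have hτ : ∀ n j, tauStar p blk βs βmin n j = oracleThreshold n (βmin n j)
      (log (inactJ (blk n) (βs n) j)) (log (actJ (blk n) (βs n) j)) := fun n j =>
    tauStar_eq_oracleThreshold p blk βs βmin n j (one_pos.trans (hcard n j).1)
      (one_pos.trans (hcard n j).2)
  refine ⟨fun j => ?_, fun j => ?_, ?_⟩
  · filter_upwards [eventually_gt_atTop 0, hbetamin j] with n hn h
    rw [hτ]
    exact sqrt_two_mul_le_sqrt_mul_oracleThreshold (by positivity) (hlog n j).1 (hlog n j).2.le h
  · filter_upwards [eventually_gt_atTop 0, hbetamin j] with n hn h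
    rw [hτ, sub_oracleThreshold]
    exact sqrt_two_mul_le_sqrt_mul_oracleThreshold (by positivity) (hlog n j).2 (hlog n j).1.le
      (by rwa [add_comm])
  · filter_upwards [eventually_gt_atTop 0, eventually_all.2 hbetamin] with n hn h
    simp only [hτ]
    exact toReal_measure_oracleSelection_error_le (Pr n) (blk n) (βs n) (βt n) (hmeas n) hn
      (hlaw n) (βmin n) (fun i => (hβmin n (blk n i)).1 i rfl) (hcard n) h

/-- **Theorem 3.4, second part.** In the Gaussian sequence model with block structure,
if `p_j − s_j > 1`, `s_j > 1` and the betamin condition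
`β*_{min,j} ≥ √(2 ln(p_j−s_j)/n) + √(2 ln(s_j)/n)` holds eventually for every block,
then the oracle thresholds `τ*_j = β*_{min,j}/2 + ln(p_j/s_j − 1)/(n β*_{min,j})` satisfy
Assumptions A4 and A5, and the block threshold selector with thresholds `τ*_j` satisfies,
for all sufficiently large `n`,
`P(Ŝᵇ ≠ S) ≤ 2 ∑_j e^{−[(n/8)(β*_{min,j})² − ln max{p_j−s_j, s_j}]}`. -/
theorem stmt10 (b : ℕ) (p : ℕ → ℕ)
    (blk : (n : ℕ) → Fin (p n) → Fin b)
    (βs : (n : ℕ) → Fin (p n) → ℝ)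
    (Ω : ℕ → Type) [∀ n, MeasurableSpace (Ω n)]
    (Pr : (n : ℕ) → Measure (Ω n)) [∀ n, IsProbabilityMeasure (Pr n)]
    (βt : (n : ℕ) → Fin (p n) → Ω n → ℝ)
    (hmeas : ∀ n i, Measurable (βt n i))
    (hindep : ∀ n, iIndepFun (βt n) (Pr n))
    (hlaw : ∀ n i, Measure.map (βt n i) (Pr n) =
      gaussianReal (βs n i) ((n : ℝ≥0))⁻¹)
    (βmin : ℕ → Fin b → ℝ)
    (hβmin : ∀ n j, (∀ i : Fin (p n), blk n i = j → βs n i ≠ 0 → βmin n j ≤ |βs n i|) ∧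
      ∃ i : Fin (p n), blk n i = j ∧ βs n i ≠ 0 ∧ βmin n j = |βs n i|)
    (hcard : ∀ n j, 1 < inactJ (blk n) (βs n) j ∧ 1 < actJ (blk n) (βs n) j)
    (hbetamin : ∀ j, ∀ᶠ n : ℕ in atTop,
      Real.sqrt (2 * Real.log (inactJ (blk n) (βs n) j) / n) +
        Real.sqrt (2 * Real.log (actJ (blk n) (βs n) j) / n) ≤ βmin n j) :
    (∀ j, ∀ᶠ n : ℕ in atTop,
      Real.sqrt (2 * Real.log (inactJ (blk n) (βs n) j)) ≤
        Real.sqrt n * tauStar p blk βs βmin n j) ∧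
    (∀ j, ∀ᶠ n : ℕ in atTop,
      Real.sqrt (2 * Real.log (actJ (blk n) (βs n) j)) ≤
        Real.sqrt n * (βmin n j - tauStar p blk βs βmin n j)) ∧
    (∀ᶠ n : ℕ in atTop,
      (Pr n {ω | ¬ ∀ i : Fin (p n),
          (tauStar p blk βs βmin n (blk n i) < |βt n i ω| ↔ βs n i ≠ 0)}).toReal ≤
        2 * ∑ j : Fin b,
          Real.exp (-((n / 8) * βmin n j ^ 2 -
            Real.log (max (inactJ (blk n) (βs n) j) (actJ (blk n) (βs n) j))))) :=
  stmt10_general b p blk βs Ω Pr βt hmeas hlaw βmin hβmin hcard hbetamin
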